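/- arXiv:1611.04567 — 6 statements merged into one kernel-verified Lean document; each statement's English description precedes it below -/
import Mathlib

section
/- For all real numbers a ≥ 0, b > 0 and every integer k ≥ 1, the integral ∫₀^b (a + |log r|)^k · r dr is bounded above by C · b² · Σ_{ℓ=0}^{k} (a + |log b|)^{k-ℓ} · k^ℓ for some universal constant C > 0 (independent of a, b, k). -/
open MeasureTheory Real Finset

/-!
For `0 < r ≤ b` we have `|log r| ≤ |log b| + log (b / r)`, so with `A = a + |log b|` the integrand
is at most `(log (b / r) + A) ^ k * r`. Expanding binomially, the substitution `r = b * exp (-t)`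
turns each term into a Gamma integral: `∫₀^b log (b / r) ^ ℓ * r dr = b ^ 2 * ℓ! / 2 ^ (ℓ + 1)`.
Since `choose k ℓ * ℓ! ≤ k ^ ℓ`, the constant `C = 1` works.
-/

open Set
open scoped Nat

section ExpNegSubstitution

variable {E : Type*} [NormedAddCommGroup E] [NormedSpace ℝ E] {b : ℝ}

lemma image_const_mul_exp_neg_Ici (hb : 0 < b) :
    (fun t ↦ b * exp (-t)) '' Ici 0 = Ioc 0 b := by
  ext r
  constructor
  · rintro ⟨t, ht, rfl⟩
    exact ⟨by positivity, mul_le_of_le_one_right hb.le (exp_le_one_iff.2 (by simpa using ht))⟩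
  · rintro ⟨hr, hrb⟩
    refine ⟨log (b / r), log_nonneg ((one_le_div hr).2 hrb), ?_⟩
    simp only [exp_neg, exp_log (div_pos hb hr)]
    field_simp

lemma hasDerivAt_const_mul_exp_neg (b t : ℝ) :
    HasDerivAt (fun t ↦ b * exp (-t)) (-(b * exp (-t))) t := by
  simpa using ((hasDerivAt_neg t).exp).const_mul b

lemma injective_const_mul_exp_neg (hb : b ≠ 0) : Function.Injective fun t ↦ b * exp (-t) :=
  fun _ _ h ↦ neg_injective (exp_injective (mul_left_cancel₀ hb h))

theorem integral_Ioc_zero_eq_integral_Ici_exp_neg (g : ℝ → E) (hb : 0 < b) :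
    ∫ r in Ioc 0 b, g r = ∫ t in Ici 0, (b * exp (-t)) • g (b * exp (-t)) := by
  rw [← image_const_mul_exp_neg_Ici hb, integral_image_eq_integral_abs_deriv_smul measurableSet_Ici
    (fun t _ ↦ (hasDerivAt_const_mul_exp_neg b t).hasDerivWithinAt)
    (injective_const_mul_exp_neg hb.ne').injOn]
  simp only [abs_neg, abs_of_pos (by positivity : 0 < b * exp (-_))]

theorem integrableOn_Ioc_zero_iff_integrableOn_Ici_exp_neg (g : ℝ → E) (hb : 0 < b) :
    IntegrableOn g (Ioc 0 b) ↔
      IntegrableOn (fun t ↦ (b * exp (-t)) • g (b * exp (-t))) (Ici 0) := by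
  rw [← image_const_mul_exp_neg_Ici hb, integrableOn_image_iff_integrableOn_abs_deriv_smul
    measurableSet_Ici (fun t _ ↦ (hasDerivAt_const_mul_exp_neg b t).hasDerivWithinAt)
    (injective_const_mul_exp_neg hb.ne').injOn]
  simp only [abs_neg, abs_of_pos (by positivity : 0 < b * exp (-_))]

end ExpNegSubstitution

lemma integrableOn_pow_mul_exp_neg_mul_Ioi (n : ℕ) {c : ℝ} (hc : 0 < c) :
    IntegrableOn (fun t : ℝ ↦ t ^ n * exp (-(c * t))) (Ioi 0) := by
  simpa [rpow_natCast] using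
    integrableOn_rpow_mul_exp_neg_mul_rpow (p := 1) (s := n) (b := c)
      (by linarith [n.cast_nonneg (α := ℝ)]) one_pos hc

lemma integral_pow_mul_exp_neg_mul_Ioi (n : ℕ) {c : ℝ} (hc : 0 < c) :
    ∫ t in Ioi 0, t ^ n * exp (-(c * t)) = n ! / c ^ (n + 1) := by
  have := integral_rpow_mul_exp_neg_mul_Ioi (a := n + 1) (by positivity) hc
  simp only [add_sub_cancel_right, rpow_natCast, Gamma_nat_eq_factorial] at this
  rw [this, div_rpow one_pos.le hc.le, one_rpow, ← Nat.cast_add_one, rpow_natCast]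
  ring

lemma const_mul_exp_neg_smul_log_div_pow_mul_pow {b : ℝ} (hb : 0 < b) (n m : ℕ) (t : ℝ) :
    (b * exp (-t)) • (log (b / (b * exp (-t))) ^ n * (b * exp (-t)) ^ m) =
      b ^ (m + 1) * (t ^ n * exp (-((m + 1) * t))) := by
  have hlog : log (b / (b * exp (-t))) = t := by
    rw [div_mul_cancel_left₀ hb.ne', exp_neg, inv_inv, log_exp]
  have hexp : exp (-((m + 1) * t)) = exp (-t) ^ (m + 1) := by
    rw [← exp_nat_mul]; push_cast; ring_nf
  rw [smul_eq_mul, hlog, hexp]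
  ring

lemma integrableOn_log_div_pow_mul_pow {b : ℝ} (hb : 0 < b) (n m : ℕ) :
    IntegrableOn (fun r ↦ log (b / r) ^ n * r ^ m) (Ioc 0 b) := by
  rw [integrableOn_Ioc_zero_iff_integrableOn_Ici_exp_neg _ hb,
    integrableOn_Ici_iff_integrableOn_Ioi]
  refine IntegrableOn.congr_fun
    ((integrableOn_pow_mul_exp_neg_mul_Ioi n (c := m + 1) (by positivity)).const_mul (b ^ (m + 1)))
    (fun t _ ↦ (const_mul_exp_neg_smul_log_div_pow_mul_pow hb n m t).symm) measurableSet_Ioi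

lemma integral_log_div_pow_mul_pow {b : ℝ} (hb : 0 < b) (n m : ℕ) :
    ∫ r in Ioc 0 b, log (b / r) ^ n * r ^ m = b ^ (m + 1) * (n ! / (m + 1) ^ (n + 1)) := by
  rw [integral_Ioc_zero_eq_integral_Ici_exp_neg _ hb, integral_Ici_eq_integral_Ioi]
  simp_rw [const_mul_exp_neg_smul_log_div_pow_mul_pow hb n m, integral_const_mul]
  rw [integral_pow_mul_exp_neg_mul_Ioi n (by positivity)]

lemma add_pow_mul_eq_sum_log_div_pow_mul_pow (b A r : ℝ) (k : ℕ) :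
    (log (b / r) + A) ^ k * r =
      ∑ ℓ ∈ range (k + 1), A ^ (k - ℓ) * k.choose ℓ * (log (b / r) ^ ℓ * r ^ 1) := by
  rw [add_pow, sum_mul]
  exact sum_congr rfl fun ℓ _ ↦ by ring

lemma integrableOn_log_div_add_pow_mul {b : ℝ} (hb : 0 < b) (A : ℝ) (k : ℕ) :
    IntegrableOn (fun r ↦ (log (b / r) + A) ^ k * r) (Ioc 0 b) := by
  simp_rw [add_pow_mul_eq_sum_log_div_pow_mul_pow b A _ k]
  exact integrable_finsetSum _ fun ℓ _ ↦ (integrableOn_log_div_pow_mul_pow hb ℓ 1).const_mul _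

lemma integral_log_div_add_pow_mul {b : ℝ} (hb : 0 < b) (A : ℝ) (k : ℕ) :
    ∫ r in Ioc 0 b, (log (b / r) + A) ^ k * r =
      b ^ 2 * ∑ ℓ ∈ range (k + 1), A ^ (k - ℓ) * (k.choose ℓ * (ℓ ! / 2 ^ (ℓ + 1))) := by
  simp_rw [add_pow_mul_eq_sum_log_div_pow_mul_pow b A _ k]
  rw [integral_finsetSum _ fun ℓ _ ↦ (integrableOn_log_div_pow_mul_pow hb ℓ 1).const_mul _,
    mul_sum]
  refine sum_congr rfl fun ℓ _ ↦ ?_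
  rw [integral_const_mul, integral_log_div_pow_mul_pow hb]
  push_cast
  ring

lemma choose_mul_factorial_div_two_pow_le (k ℓ : ℕ) :
    (k.choose ℓ : ℝ) * (ℓ ! / 2 ^ (ℓ + 1)) ≤ k ^ ℓ := calc
  (k.choose ℓ : ℝ) * (ℓ ! / 2 ^ (ℓ + 1)) ≤ k.choose ℓ * ℓ ! := by
    gcongr
    exact div_le_self (by positivity) (one_le_pow₀ one_le_two)
  _ ≤ k ^ ℓ := (le_div_iff₀ (by positivity)).1 (Nat.choose_le_pow_div ℓ k)

lemma abs_log_le_abs_log_add_log_div {r b : ℝ} (hr : 0 < r) (hrb : r ≤ b) :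
    |log r| ≤ |log b| + log (b / r) := by
  have hL : 0 ≤ log (b / r) := log_nonneg ((one_le_div hr).2 hrb)
  calc |log r| = |log b - log (b / r)| := by
        rw [log_div (hr.trans_le hrb).ne' hr.ne', sub_sub_cancel]
    _ ≤ |log b| + |log (b / r)| := abs_sub _ _
    _ = |log b| + log (b / r) := by rw [abs_of_nonneg hL]

/-- For all `a ≥ 0`, `b > 0` and integer `k ≥ 1`,
`∫₀^b (a + |log r|)^k · r dr ≤ C · b² · Σ_{ℓ=0}^{k} (a + |log b|)^{k-ℓ} · k^ℓ`
for a universal constant `C > 0`. -/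
theorem integral_log_pow_mul_le :
    ∃ C : ℝ, 0 < C ∧ ∀ (a b : ℝ) (k : ℕ), 0 ≤ a → 0 < b → 1 ≤ k →
      ∫ r in Set.Ioc (0 : ℝ) b, (a + |Real.log r|) ^ k * r
        ≤ C * b ^ 2 * ∑ ℓ ∈ Finset.range (k + 1),
            (a + |Real.log b|) ^ (k - ℓ) * (k : ℝ) ^ ℓ := by
  refine ⟨1, one_pos, fun a b k ha hb _ ↦ ?_⟩
  set A := a + |log b|
  have hpointwise : ∀ r ∈ Ioc 0 b, (a + |log r|) ^ k * r ≤ (log (b / r) + A) ^ k * r :=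
    fun r ⟨hr, hrb⟩ ↦ by
      have := abs_log_le_abs_log_add_log_div hr hrb
      gcongr ?_ ^ k * r
      linarith
  calc ∫ r in Ioc 0 b, (a + |log r|) ^ k * r ≤ ∫ r in Ioc 0 b, (log (b / r) + A) ^ k * r :=
        integral_mono_of_nonneg
          ((ae_restrict_mem measurableSet_Ioc).mono fun r hr ↦ by have := hr.1; positivity)
          (integrableOn_log_div_add_pow_mul hb A k)
          ((ae_restrict_mem measurableSet_Ioc).mono hpointwise)
    _ = b ^ 2 * ∑ ℓ ∈ range (k + 1), A ^ (k - ℓ) * (k.choose ℓ * (ℓ ! / 2 ^ (ℓ + 1))) :=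
        integral_log_div_add_pow_mul hb A k
    _ ≤ 1 * b ^ 2 * ∑ ℓ ∈ range (k + 1), A ^ (k - ℓ) * (k : ℝ) ^ ℓ := by
        rw [one_mul]
        gcongr with ℓ
        exact choose_mul_factorial_div_two_pow_le k ℓ
end

section
/- For all real numbers a ≥ 0, b > 0 and every integer k ≥ 0, the integral ∫_b^∞ (a + |log r|)^k / r · e^{-r²/8} dr is bounded above by C · ( (a + |log b|)^{k+1}/(k+1) + e^{-b²/8} · Σ_{ℓ=0}^{k} (4k)^ℓ (a + |log b|)^{k-ℓ} ) for some universal constant C > 0 independent of a, b, k. -/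
open MeasureTheory Real Finset

/-!
Split the integral at `max b 1`. On `[b, 1)` the Gaussian factor is at most `1`, and
`(a - log r)^k / r` has the primitive `-(a - log r)^(k+1) / (k+1)`. On `[max b 1, ∞)` write
`r = max b 1 + s`: then `a + log r ≤ x + s` with `x = a + |log b|`, the binomial theorem with
`choose k ℓ * s^ℓ ≤ k^ℓ e^s` gives `(x + s)^k ≤ e^s ∑ (4k)^ℓ x^(k-ℓ)`, and completing the square
bounds `e^s e^(-r²/8)` by `e² e^(-b²/8) e^(-(s-4)²/8)`, whose integral is `e² √(8π) e^(-b²/8)`.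
-/

lemma pow_add_le_exp_mul_sum {x s c : ℝ} (hx : 0 ≤ x) (hs : 0 ≤ s) {k : ℕ}
    (hkc : (k : ℝ) ≤ c) :
    (x + s) ^ k ≤ exp s * ∑ ℓ ∈ range (k + 1), c ^ ℓ * x ^ (k - ℓ) := by
  rw [add_comm, add_pow, mul_sum]
  refine sum_le_sum fun ℓ _ => ?_
  have hchoose : s ^ ℓ * (k.choose ℓ : ℝ) ≤ exp s * c ^ ℓ :=
    calc s ^ ℓ * (k.choose ℓ : ℝ) ≤ s ^ ℓ * ((k : ℝ) ^ ℓ / ℓ.factorial) :=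
          mul_le_mul_of_nonneg_left (Nat.choose_le_pow_div ℓ k) (by positivity)
      _ = s ^ ℓ / ℓ.factorial * (k : ℝ) ^ ℓ := by ring
      _ ≤ exp s * c ^ ℓ := mul_le_mul (pow_div_factorial_le_exp s hs ℓ)
          (pow_le_pow_left₀ k.cast_nonneg hkc ℓ) (by positivity) (exp_nonneg s)
  calc s ^ ℓ * x ^ (k - ℓ) * (k.choose ℓ : ℝ)
      = s ^ ℓ * (k.choose ℓ : ℝ) * x ^ (k - ℓ) := by ring
    _ ≤ exp s * c ^ ℓ * x ^ (k - ℓ) := mul_le_mul_of_nonneg_right hchoose (pow_nonneg hx _)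
    _ = exp s * (c ^ ℓ * x ^ (k - ℓ)) := by ring

lemma log_le_log_add_sub {m r : ℝ} (hm : 1 ≤ m) (hmr : m ≤ r) : log r ≤ log m + (r - m) := by
  have hm0 : 0 < m := by linarith
  have h := log_le_sub_one_of_pos (div_pos (hm0.trans_le hmr) hm0)
  rw [log_div (by linarith) hm0.ne'] at h
  have : r / m - 1 ≤ r - m := by
    rw [div_sub_one hm0.ne', div_le_iff₀ hm0]; nlinarith
  linarith

lemma log_max_one_le_abs_log (b : ℝ) : log (max b 1) ≤ |log b| := by
  rcases le_total b 1 with h | h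
  · rw [max_eq_right h, log_one]; exact abs_nonneg _
  · rw [max_eq_left h]; exact le_abs_self _

lemma exp_mul_exp_neg_sq_div_eight_le {b m s : ℝ} (hb : 0 ≤ b) (hbm : b ≤ m) (hs : 0 ≤ s) :
    exp s * exp (-(m + s) ^ 2 / 8) ≤ exp 2 * exp (-b ^ 2 / 8) * exp (-(1 / 8) * (s - 4) ^ 2) := by
  simp only [← exp_add, exp_le_exp]
  -- `s - s² / 8 = 2 - (s - 4)² / 8` and `(m + s)² ≥ b² + s²`
  nlinarith

lemma continuousOn_add_abs_log_pow_div_mul_exp (a : ℝ) (k : ℕ) :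
    ContinuousOn (fun r => (a + |log r|) ^ k / r * exp (-r ^ 2 / 8)) (Set.Ioi 0) := by
  fun_prop (disch := first | exact fun r hr => ne_of_gt hr | norm_num)

lemma continuousOn_sub_log_pow_div (a : ℝ) (k : ℕ) :
    ContinuousOn (fun r => (a - log r) ^ k / r) (Set.Ioi 0) := by
  fun_prop (disch := intro r hr; exact ne_of_gt hr)

lemma integrableOn_Ico_add_abs_log_pow_div_mul_exp (a : ℝ) (k : ℕ) {b c : ℝ} (hb : 0 < b) :
    IntegrableOn (fun r => (a + |log r|) ^ k / r * exp (-r ^ 2 / 8)) (Set.Ico b c) :=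
  ((continuousOn_add_abs_log_pow_div_mul_exp a k).mono fun _ hr => hb.trans_le hr.1)
    |>.integrableOn_Icc.mono_set Set.Ico_subset_Icc_self

lemma integral_sub_log_pow_div (a : ℝ) (k : ℕ) {b c : ℝ} (hb : 0 < b) (hc : 0 < c) :
    ∫ r in b..c, (a - log r) ^ k / r
      = ((a - log b) ^ (k + 1) - (a - log c) ^ (k + 1)) / (k + 1) := by
  have hpos : Set.uIcc b c ⊆ Set.Ioi 0 := fun r hr => lt_of_lt_of_le (lt_min hb hc) hr.1
  rw [intervalIntegral.integral_eq_sub_of_hasDerivAt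
    (f := fun r => -(a - log r) ^ (k + 1) / (k + 1))]
  · ring
  · intro r hr
    refine ((((hasDerivAt_log (hpos hr).ne').const_sub a).fun_pow (k + 1)).fun_neg.div_const
      ((k : ℝ) + 1)).congr_deriv ?_
    field_simp
    push_cast
    ring
  · exact ((continuousOn_sub_log_pow_div a k).mono hpos).intervalIntegrable

lemma add_abs_log_pow_div_mul_exp_le {a b r : ℝ} (k : ℕ) (ha : 0 ≤ a) (hb : 0 < b)
    (hr : max b 1 ≤ r) :
    (a + |log r|) ^ k / r * exp (-r ^ 2 / 8)
      ≤ exp 2 * (exp (-b ^ 2 / 8) *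
          ∑ ℓ ∈ range (k + 1), (4 * (k : ℝ)) ^ ℓ * (a + |log b|) ^ (k - ℓ)) *
        exp (-(1 / 8) * (r - (max b 1 + 4)) ^ 2) := by
  set m := max b 1
  set x := a + |log b|
  set S := ∑ ℓ ∈ range (k + 1), (4 * (k : ℝ)) ^ ℓ * x ^ (k - ℓ)
  have hx : 0 ≤ x := by positivity
  have hs : 0 ≤ r - m := sub_nonneg.2 hr
  have hr1 : 1 ≤ r := (le_max_right b 1).trans hr
  have hlog : a + |log r| ≤ x + (r - m) := by
    rw [abs_of_nonneg (log_nonneg hr1)]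
    linarith [log_le_log_add_sub (le_max_right b 1) hr, log_max_one_le_abs_log b]
  have hbinom : (x + (r - m)) ^ k ≤ exp (r - m) * S :=
    pow_add_le_exp_mul_sum hx hs (by linarith [k.cast_nonneg (α := ℝ)])
  have hgauss := exp_mul_exp_neg_sq_div_eight_le hb.le (le_max_left b 1) hs
  rw [add_sub_cancel, sub_sub] at hgauss
  calc (a + |log r|) ^ k / r * exp (-r ^ 2 / 8)
      ≤ (x + (r - m)) ^ k * exp (-r ^ 2 / 8) := by
        gcongr
        exact (div_le_self (by positivity) hr1).trans (pow_le_pow_left₀ (by positivity) hlog k)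
    _ ≤ exp (r - m) * S * exp (-r ^ 2 / 8) := by gcongr
    _ = S * (exp (r - m) * exp (-r ^ 2 / 8)) := by ring
    _ ≤ S * (exp 2 * exp (-b ^ 2 / 8) * exp (-(1 / 8) * (r - (m + 4)) ^ 2)) := by gcongr
    _ = exp 2 * (exp (-b ^ 2 / 8) * S) * exp (-(1 / 8) * (r - (m + 4)) ^ 2) := by ring

lemma setIntegral_exp_neg_mul_sq_sub_le (s : Set ℝ) (c : ℝ) {β : ℝ} (hβ : 0 < β) :
    ∫ r in s, exp (-β * (r - c) ^ 2) ≤ √(π / β) :=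
  calc ∫ r in s, exp (-β * (r - c) ^ 2) ≤ ∫ r, exp (-β * (r - c) ^ 2) :=
        setIntegral_le_integral ((integrable_exp_neg_mul_sq hβ).comp_sub_right c)
          (ae_of_all _ fun _ => (exp_pos _).le)
    _ = √(π / β) := by
        rw [integral_sub_right_eq_self (fun r => exp (-β * r ^ 2)) c, integral_gaussian]

lemma setIntegral_Ico_add_abs_log_pow_div_mul_exp_le {a b : ℝ} (k : ℕ) (ha : 0 ≤ a) (hb : 0 < b) :
    ∫ r in Set.Ico b (max b 1), (a + |log r|) ^ k / r * exp (-r ^ 2 / 8)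
      ≤ (a + |log b|) ^ (k + 1) / (k + 1) := by
  rcases le_total 1 b with h1b | hb1
  · rw [max_eq_left h1b, Set.Ico_self, Measure.restrict_empty, integral_zero_measure]
    positivity
  rw [max_eq_right hb1]
  have hle : ∀ r ∈ Set.Ico b 1,
      (a + |log r|) ^ k / r * exp (-r ^ 2 / 8) ≤ (a - log r) ^ k / r := by
    intro r hr
    have hr0 : 0 < r := hb.trans_le hr.1
    rw [abs_of_nonpos (log_nonpos hr0.le hr.2.le), ← sub_eq_add_neg]
    refine mul_le_of_le_one_right ?_ (exp_le_one_iff.2 (by nlinarith))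
    exact div_nonneg (pow_nonneg (by linarith [log_nonpos hr0.le hr.2.le]) k) hr0.le
  calc ∫ r in Set.Ico b 1, (a + |log r|) ^ k / r * exp (-r ^ 2 / 8)
      ≤ ∫ r in Set.Ico b 1, (a - log r) ^ k / r :=
        setIntegral_mono_on (integrableOn_Ico_add_abs_log_pow_div_mul_exp a k hb)
          (((continuousOn_sub_log_pow_div a k).mono fun _ hr => hb.trans_le hr.1)
            |>.integrableOn_Icc.mono_set Set.Ico_subset_Icc_self)
          measurableSet_Ico hle
    _ = ∫ r in b..1, (a - log r) ^ k / r := by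
        rw [intervalIntegral.integral_of_le hb1, integral_Ioc_eq_integral_Ioo,
          integral_Ico_eq_integral_Ioo]
    _ = ((a - log b) ^ (k + 1) - a ^ (k + 1)) / (k + 1) := by
        rw [integral_sub_log_pow_div a k hb one_pos, log_one, sub_zero]
    _ ≤ (a - log b) ^ (k + 1) / (k + 1) := by gcongr; exact sub_le_self _ (by positivity)
    _ = (a + |log b|) ^ (k + 1) / (k + 1) := by
        rw [abs_of_nonpos (log_nonpos hb.le hb1), sub_eq_add_neg]

lemma integrableOn_Ici_add_abs_log_pow_div_mul_exp {a b : ℝ} (k : ℕ) (ha : 0 ≤ a) (hb : 0 < b) :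
    IntegrableOn (fun r => (a + |log r|) ^ k / r * exp (-r ^ 2 / 8)) (Set.Ici (max b 1)) := by
  set K := exp 2 * (exp (-b ^ 2 / 8) *
    ∑ ℓ ∈ range (k + 1), (4 * (k : ℝ)) ^ ℓ * (a + |log b|) ^ (k - ℓ))
  have hpos : Set.Ici (max b 1) ⊆ Set.Ioi 0 :=
    fun r hr => one_pos.trans_le ((le_max_right b 1).trans hr)
  refine Integrable.mono'
    (((integrable_exp_neg_mul_sq (by norm_num : (0 : ℝ) < 1 / 8)).comp_sub_right
      (max b 1 + 4)).const_mul K).integrableOn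
    (((continuousOn_add_abs_log_pow_div_mul_exp a k).mono hpos).aestronglyMeasurable
      measurableSet_Ici) ?_
  refine (ae_restrict_iff' measurableSet_Ici).2 (ae_of_all _ fun r hr => ?_)
  have hr0 : 0 < r := hpos hr
  rw [norm_of_nonneg (by positivity)]
  exact add_abs_log_pow_div_mul_exp_le k ha hb hr

lemma setIntegral_Ici_add_abs_log_pow_div_mul_exp_le {a b : ℝ} (k : ℕ) (ha : 0 ≤ a) (hb : 0 < b) :
    ∫ r in Set.Ici (max b 1), (a + |log r|) ^ k / r * exp (-r ^ 2 / 8)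
      ≤ exp 2 * √(π / (1 / 8)) * (exp (-b ^ 2 / 8) *
          ∑ ℓ ∈ range (k + 1), (4 * (k : ℝ)) ^ ℓ * (a + |log b|) ^ (k - ℓ)) := by
  set K := exp 2 * (exp (-b ^ 2 / 8) *
    ∑ ℓ ∈ range (k + 1), (4 * (k : ℝ)) ^ ℓ * (a + |log b|) ^ (k - ℓ))
  have hK : 0 ≤ K := by positivity
  calc ∫ r in Set.Ici (max b 1), (a + |log r|) ^ k / r * exp (-r ^ 2 / 8)
      ≤ ∫ r in Set.Ici (max b 1), K * exp (-(1 / 8) * (r - (max b 1 + 4)) ^ 2) :=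
        setIntegral_mono_on (integrableOn_Ici_add_abs_log_pow_div_mul_exp k ha hb)
          (((integrable_exp_neg_mul_sq (by norm_num : (0 : ℝ) < 1 / 8)).comp_sub_right
            (max b 1 + 4)).const_mul K).integrableOn
          measurableSet_Ici fun r hr => add_abs_log_pow_div_mul_exp_le k ha hb hr
    _ = K * ∫ r in Set.Ici (max b 1), exp (-(1 / 8) * (r - (max b 1 + 4)) ^ 2) :=
        integral_const_mul K _
    _ ≤ K * √(π / (1 / 8)) := by
        gcongr; exact setIntegral_exp_neg_mul_sq_sub_le _ _ (by norm_num)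
    _ = _ := by ring

/-- For all `a ≥ 0`, `b > 0` and integer `k ≥ 0`,
`∫_b^∞ (a + |log r|)^k / r · e^{-r²/8} dr`
is bounded by `C·((a+|log b|)^{k+1}/(k+1) + e^{-b²/8}·Σ_{ℓ=0}^{k}(4k)^ℓ (a+|log b|)^{k-ℓ})`
for a universal constant `C > 0`. -/
theorem integral_log_pow_div_mul_exp_le :
    ∃ C : ℝ, 0 < C ∧ ∀ (a b : ℝ) (k : ℕ), 0 ≤ a → 0 < b →
      ∫ r in Set.Ici b, (a + |Real.log r|) ^ k / r * Real.exp (-r ^ 2 / 8)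
        ≤ C * ((a + |Real.log b|) ^ (k + 1) / (k + 1)
            + Real.exp (-b ^ 2 / 8) * ∑ ℓ ∈ Finset.range (k + 1),
                (4 * (k : ℝ)) ^ ℓ * (a + |Real.log b|) ^ (k - ℓ)) := by
  refine ⟨exp 2 * √(π / (1 / 8)), by positivity, fun a b k ha hb => ?_⟩
  have hC : 1 ≤ exp 2 * √(π / (1 / 8)) :=
    one_le_mul_of_one_le_of_one_le (one_le_exp (by norm_num))
      (one_le_sqrt.2 (by nlinarith [pi_gt_three]))
  rw [← Set.Ico_union_Ici_eq_Ici (le_max_left b 1),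
    setIntegral_union ((Set.Iio_disjoint_Ici le_rfl).mono_left Set.Ico_subset_Iio_self)
      measurableSet_Ici (integrableOn_Ico_add_abs_log_pow_div_mul_exp a k hb)
      (integrableOn_Ici_add_abs_log_pow_div_mul_exp k ha hb)]
  have hnear := setIntegral_Ico_add_abs_log_pow_div_mul_exp_le k ha hb
  have hfar := setIntegral_Ici_add_abs_log_pow_div_mul_exp_le k ha hb
  have : 0 ≤ (a + |log b|) ^ (k + 1) / (k + 1) := by positivity
  nlinarith
end

section
/- Let f_k(x) = (8/(π²k²)) exp(−2‖x‖²/k) for x ∈ ℝ^4. Let α, β, γ > 0 satisfy β > α + 4 and 4 + 2γ + α − β < 0. Suppose i, k, n ∈ ℕ and x, z ∈ ℤ^4 satisfy k ≥ n/(log n)^α, ‖x‖ ≤ √n (log n)², i ≤ k/(log n)^β, and ‖z‖ ≤ √i (log n)^γ. Then f_{k−i}(x−z) = f_k(x)(1 + o(1)) as n → ∞, i.e. the ratio f_{k−i}(x−z)/f_k(x) tends to 1 uniformly over all such choices. -/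
/-!
The ratio equals `(k/(k-i))² · exp t` with `t = 2‖x‖²/k - 2‖x-z‖²/(k-i)`, and `(p, t) ↦ p² eᵗ`
is continuous at `(1, 0)` with value `1`, so it suffices that `k/(k-i) → 1` and `t → 0`
uniformly. With `L = log n` the hypotheses give `i ≤ k L^(-β)`, `‖x‖² ≤ k L^(4+α)` and
`‖z‖² ≤ i L^(2γ)`. Since `|t| ≤ 4‖x‖²i/k² + 8‖x‖‖z‖/k + 4‖z‖²/k`, this bounds `|t|` by
`4 L^(4+α-β) + 8 L^((4+α+2γ-β)/2) + 4 L^(2γ-β)`, and all three exponents are negative.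
-/

open Real

/-- The Gaussian-type kernel `f_k(x) = (8/(π²k²)) exp(−2‖x‖²/k)` on `ℝ⁴`,
with a real time parameter `k`. -/
noncomputable def gaussKer (k : ℝ) (x : EuclideanSpace ℝ (Fin 4)) : ℝ :=
  8 / (Real.pi ^ 2 * k ^ 2) * Real.exp (-2 * ‖x‖ ^ 2 / k)

open Filter Topology

lemma gaussKer_div_gaussKer {k k' : ℝ} (hk : k ≠ 0) (hk' : k' ≠ 0)
    (x y : EuclideanSpace ℝ (Fin 4)) :
    gaussKer k' y / gaussKer k x
      = (k / k') ^ 2 * exp (2 * ‖x‖ ^ 2 / k - 2 * ‖y‖ ^ 2 / k') := by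
  simp only [gaussKer, neg_mul, neg_div, exp_neg, exp_sub]
  field_simp

lemma exists_pos_abs_sq_mul_exp_sub_one_lt {ε : ℝ} (hε : 0 < ε) :
    ∃ η > 0, ∀ p t : ℝ, |p - 1| < η → |t| < η → |p ^ 2 * exp t - 1| < ε := by
  have hcont : ContinuousAt (fun q : ℝ × ℝ => q.1 ^ 2 * exp q.2) (1, 0) := by fun_prop
  obtain ⟨η, hη, h⟩ := Metric.continuousAt_iff.1 hcont ε hε
  refine ⟨η, hη, fun p t hp ht => ?_⟩
  have hclose : dist (p, t) (1, 0) < η := by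
    simpa [Prod.dist_eq, Real.dist_eq] using ⟨hp, ht⟩
  simpa [Real.dist_eq] using h hclose

lemma abs_sq_norm_sub_sq_norm_sub_le {E : Type*} [SeminormedAddCommGroup E] (x z : E) :
    |‖x‖ ^ 2 - ‖x - z‖ ^ 2| ≤ ‖z‖ * (2 * ‖x‖ + ‖z‖) := by
  have h₁ : |‖x‖ - ‖x - z‖| ≤ ‖z‖ := by simpa using abs_norm_sub_norm_le x (x - z)
  have h₂ : ‖x - z‖ ≤ ‖x‖ + ‖z‖ := norm_sub_le x z
  rw [sq_sub_sq, abs_mul, mul_comm, abs_of_nonneg (by positivity : 0 ≤ ‖x‖ + ‖x - z‖)]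
  exact mul_le_mul h₁ (by linarith) (by positivity) (norm_nonneg z)

lemma abs_div_sub_sub_one_le {k i : ℝ} (hk : 0 < k) (hi : 0 ≤ i) (hik : 2 * i ≤ k) :
    |k / (k - i) - 1| ≤ 2 * (i / k) := by
  have hki : 0 < k - i := by linarith
  rw [div_sub_one hki.ne', sub_sub_cancel, abs_of_nonneg (div_nonneg hi hki.le),
    div_le_iff₀ hki]
  field_simp
  nlinarith

lemma abs_two_sq_norm_div_sub_le {E : Type*} [SeminormedAddCommGroup E] {k i : ℝ}
    (hk : 0 < k) (hi : 0 ≤ i) (hik : 2 * i ≤ k) (x z : E) :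
    |2 * ‖x‖ ^ 2 / k - 2 * ‖x - z‖ ^ 2 / (k - i)|
      ≤ 4 * (‖x‖ ^ 2 * i / k ^ 2) + 8 * (‖x‖ * ‖z‖ / k) + 4 * (‖z‖ ^ 2 / k) := by
  have hki : 0 < k - i := by linarith
  have hD := abs_sq_norm_sub_sq_norm_sub_le x z
  have hsplit : 2 * ‖x‖ ^ 2 / k - 2 * ‖x - z‖ ^ 2 / (k - i)
      = (2 * k * (‖x‖ ^ 2 - ‖x - z‖ ^ 2) - 2 * ‖x‖ ^ 2 * i) / (k * (k - i)) := by
    field_simp; ring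
  calc |2 * ‖x‖ ^ 2 / k - 2 * ‖x - z‖ ^ 2 / (k - i)|
      ≤ (2 * k * (‖z‖ * (2 * ‖x‖ + ‖z‖)) + 2 * ‖x‖ ^ 2 * i) / (k * (k / 2)) := by
        rw [hsplit, abs_div, abs_of_pos (by positivity : 0 < k * (k - i))]
        gcongr
        · calc |2 * k * (‖x‖ ^ 2 - ‖x - z‖ ^ 2) - 2 * ‖x‖ ^ 2 * i|
              ≤ |2 * k * (‖x‖ ^ 2 - ‖x - z‖ ^ 2)| + |2 * ‖x‖ ^ 2 * i| := abs_sub _ _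
            _ = 2 * k * |‖x‖ ^ 2 - ‖x - z‖ ^ 2| + 2 * ‖x‖ ^ 2 * i := by
              rw [abs_mul, abs_of_pos (by positivity : 0 < 2 * k),
                abs_of_nonneg (by positivity : 0 ≤ 2 * ‖x‖ ^ 2 * i)]
            _ ≤ _ := by gcongr
        · linarith
    _ = _ := by field_simp; ring

lemma sq_le_of_le_sqrt_mul {r a b : ℝ} (hr : 0 ≤ r) (ha : 0 ≤ a) (h : r ≤ √a * b) :
    r ^ 2 ≤ a * b ^ 2 := by
  calc r ^ 2 ≤ (√a * b) ^ 2 := pow_le_pow_left₀ hr h 2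
    _ = a * b ^ 2 := by rw [mul_pow, sq_sqrt ha]

lemma sq_le_mul_rpow_of_le_sqrt_mul_sq {r n k L α : ℝ} (hr : 0 ≤ r) (hn : 0 ≤ n) (hL : 0 < L)
    (hk : n / L ^ α ≤ k) (h : r ≤ √n * L ^ 2) : r ^ 2 ≤ k * L ^ (4 + α) := by
  have hnk : n ≤ k * L ^ α := (div_le_iff₀ (rpow_pos_of_pos hL α)).1 hk
  calc r ^ 2 ≤ n * (L ^ 2) ^ 2 := sq_le_of_le_sqrt_mul hr hn h
    _ = n * L ^ (4 : ℝ) := by rw [← pow_mul, ← rpow_natCast]; norm_num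
    _ ≤ k * L ^ α * L ^ (4 : ℝ) := by gcongr
    _ = k * L ^ (4 + α) := by rw [rpow_add hL]; ring

lemma sq_le_mul_rpow_of_le_sqrt_mul_rpow {r i L γ : ℝ} (hr : 0 ≤ r) (hi : 0 ≤ i) (hL : 0 < L)
    (h : r ≤ √i * L ^ γ) : r ^ 2 ≤ i * L ^ (2 * γ) := by
  have hpow : L ^ (2 * γ) = (L ^ γ) ^ 2 := by rw [← rpow_natCast, ← rpow_mul hL.le]; ring_nf
  rw [hpow]
  exact sq_le_of_le_sqrt_mul hr hi h

lemma exponent_terms_le_rpow {L k i a b p q r : ℝ} (hL : 0 < L) (hk : 0 < k) (hi : 0 ≤ i)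
    (ha : 0 ≤ a) (hb : 0 ≤ b) (hak : a ^ 2 ≤ k * L ^ p) (hik : i ≤ k * L ^ q)
    (hbi : b ^ 2 ≤ i * L ^ r) :
    4 * (a ^ 2 * i / k ^ 2) + 8 * (a * b / k) + 4 * (b ^ 2 / k)
      ≤ 4 * L ^ (p + q) + 8 * √(L ^ (p + q + r)) + 4 * L ^ (q + r) := by
  have hbk : b ^ 2 ≤ k * L ^ (q + r) := by
    calc b ^ 2 ≤ i * L ^ r := hbi
      _ ≤ k * L ^ q * L ^ r := by gcongr
      _ = k * L ^ (q + r) := by rw [rpow_add hL]; ring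
  have hai : a ^ 2 * i / k ^ 2 ≤ L ^ (p + q) := by
    rw [div_le_iff₀ (by positivity)]
    calc a ^ 2 * i ≤ k * L ^ p * (k * L ^ q) := by gcongr
      _ = L ^ (p + q) * k ^ 2 := by rw [rpow_add hL]; ring
  have hab : a * b / k ≤ √(L ^ (p + q + r)) := by
    rw [div_le_iff₀ hk, ← sqrt_sq hk.le, ← sqrt_mul (by positivity),
      le_sqrt (by positivity) (by positivity)]
    calc (a * b) ^ 2 = a ^ 2 * b ^ 2 := by ring
      _ ≤ k * L ^ p * (k * L ^ (q + r)) := by gcongr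
      _ = L ^ (p + q + r) * k ^ 2 := by simp only [rpow_add hL]; ring
  have hbk' : b ^ 2 / k ≤ L ^ (q + r) := by
    rw [div_le_iff₀ hk]; linarith
  gcongr

lemma tendsto_log_natCast_rpow_nhds_zero {c : ℝ} (hc : c < 0) :
    Tendsto (fun n : ℕ => log n ^ c) atTop (𝓝 0) := by
  simpa [Function.comp_def] using (tendsto_rpow_neg_atTop (neg_pos.2 hc)).comp
    (tendsto_log_atTop.comp tendsto_natCast_atTop_atTop)

lemma tendsto_exponent_terms_bound {p q r : ℝ} (hpq : p + q < 0) (hpqr : p + q + r < 0)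
    (hqr : q + r < 0) :
    Tendsto (fun n : ℕ =>
      4 * log n ^ (p + q) + 8 * √(log n ^ (p + q + r)) + 4 * log n ^ (q + r)) atTop (𝓝 0) := by
  simpa using (((tendsto_log_natCast_rpow_nhds_zero hpq).const_mul 4).add
    ((tendsto_log_natCast_rpow_nhds_zero hpqr).sqrt.const_mul 8)).add
    ((tendsto_log_natCast_rpow_nhds_zero hqr).const_mul 4)

theorem gaussKer_ratio_tendsto_one_general
    (α β γ : ℝ) (hα : 0 < α)
    (h1 : β > α + 4) (h2 : 4 + 2 * γ + α - β < 0) :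
    ∀ ε : ℝ, 0 < ε → ∃ N : ℕ, ∀ (n i k : ℕ),
      N ≤ n →
      ∀ x z : EuclideanSpace ℝ (Fin 4),
        (n : ℝ) / (Real.log n) ^ α ≤ (k : ℝ) →
        ‖x‖ ≤ Real.sqrt n * (Real.log n) ^ 2 →
        (i : ℝ) ≤ (k : ℝ) / (Real.log n) ^ β →
        ‖z‖ ≤ Real.sqrt i * (Real.log n) ^ γ →
        |gaussKer ((k : ℝ) - (i : ℝ)) (x - z) / gaussKer (k : ℝ) x - 1| ≤ ε := by
  intro ε hε
  obtain ⟨η, hη, hratio⟩ := exists_pos_abs_sq_mul_exp_sub_one_lt hε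
  have hδ := tendsto_log_natCast_rpow_nhds_zero (show -β < 0 by linarith)
  have hexp := tendsto_exponent_terms_bound (p := 4 + α) (q := -β) (r := 2 * γ)
    (by linarith) (by linarith) (by linarith)
  obtain ⟨N, hN⟩ := eventually_atTop.1 <| (eventually_gt_atTop 1).and <|
    (hδ.eventually (gt_mem_nhds (lt_min one_half_pos (half_pos hη)))).and
    (hexp.eventually (gt_mem_nhds hη))
  refine ⟨N, fun n i k hn x z hk hx hi hz => ?_⟩
  obtain ⟨hn1, hδn, hexpn⟩ := hN n hn
  have hL : 0 < log n := log_pos (by exact_mod_cast hn1)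
  have hk0 : (0 : ℝ) < k :=
    (div_pos (by positivity) (rpow_pos_of_pos hL α)).trans_le hk
  have hik : (i : ℝ) ≤ k * log n ^ (-β) := by rwa [rpow_neg hL.le, ← div_eq_mul_inv]
  have h2ik : 2 * (i : ℝ) ≤ k := by nlinarith [min_le_left (1 / 2 : ℝ) (η / 2)]
  rw [gaussKer_div_gaussKer hk0.ne' (by linarith)]
  refine (hratio _ _ ?_ ?_).le
  · calc |(k : ℝ) / (k - i) - 1| ≤ 2 * (i / k) :=
          abs_div_sub_sub_one_le hk0 i.cast_nonneg h2ik
      _ ≤ 2 * log n ^ (-β) := by gcongr; rwa [div_le_iff₀ hk0, mul_comm]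
      _ < η := by linarith [min_le_right (1 / 2 : ℝ) (η / 2)]
  · calc _ ≤ _ := abs_two_sq_norm_div_sub_le hk0 i.cast_nonneg h2ik x z
      _ ≤ _ := exponent_terms_le_rpow hL hk0 i.cast_nonneg (norm_nonneg x) (norm_nonneg z)
          (sq_le_mul_rpow_of_le_sqrt_mul_sq (norm_nonneg x) n.cast_nonneg hL hk hx) hik
          (sq_le_mul_rpow_of_le_sqrt_mul_rpow (norm_nonneg z) i.cast_nonneg hL hz)
      _ < η := hexpn

/-- if `β > α + 4` and `4 + 2γ + α − β < 0`, then uniformly over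
`k ≥ n/(log n)^α`, `‖x‖ ≤ √n (log n)²`, `i ≤ k/(log n)^β`, `‖z‖ ≤ √i (log n)^γ`,
the ratio `f_{k−i}(x−z)/f_k(x)` tends to `1` as `n → ∞`. -/
theorem gaussKer_ratio_tendsto_one
    (α β γ : ℝ) (hα : 0 < α) (hβ : 0 < β) (hγ : 0 < γ)
    (h1 : β > α + 4) (h2 : 4 + 2 * γ + α - β < 0) :
    ∀ ε : ℝ, 0 < ε → ∃ N : ℕ, ∀ (n i k : ℕ),
      N ≤ n →
      ∀ x z : EuclideanSpace ℝ (Fin 4),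
        (n : ℝ) / (Real.log n) ^ α ≤ (k : ℝ) →
        ‖x‖ ≤ Real.sqrt n * (Real.log n) ^ 2 →
        (i : ℝ) ≤ (k : ℝ) / (Real.log n) ^ β →
        ‖z‖ ≤ Real.sqrt i * (Real.log n) ^ γ →
        |gaussKer ((k : ℝ) - (i : ℝ)) (x - z) / gaussKer (k : ℝ) x - 1| ≤ ε :=
  gaussKer_ratio_tendsto_one_general α β γ hα h1 h2
end

section
/- Let the random variable γ := γ_G(C₁) be defined as the L²-limit of Σ_{i=1}^{∞} Σ_{j=1}^{2^{i−1}} ( ∫_{A_{i,j}} G(β_s,β_t) ds dt − E[∫_{A_{i,j}} G(β_s,β_t) ds dt] ). If X satisfies E[e^{λ₀X}] = ∞ for some λ₀ > 0 and γ = (γ₁ + γ₂ + X − E[X])/2, where γ₁, γ₂ are independent copies of γ, then either E[e^{4λ₀γ}] = ∞ or E[e^{−2λ₀γ}] = ∞. -/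
open MeasureTheory ProbabilityTheory Real

/-- abstract step: if `γ₁, γ₂` are independent copies of `γ`,
`X` is integrable, `2γ = γ₁ + γ₂ + X − E[X]` a.s., and `E[e^{lam X}] = ∞` for some
`lam > 0`, then `E[e^{4lam γ}] = ∞` or `E[e^{−2lam γ}] = ∞`. -/
theorem exp_moment_infinite_of_decomposition
    {Ω : Type*} [MeasurableSpace Ω] (μ : Measure Ω) [IsProbabilityMeasure μ]
    (γ γ₁ γ₂ X : Ω → ℝ)
    (hγ : Measurable γ) (hγ₁ : Measurable γ₁) (hγ₂ : Measurable γ₂) (hX : Measurable X)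
    (hindep : ProbabilityTheory.IndepFun γ₁ γ₂ μ)
    (hlaw₁ : Measure.map γ₁ μ = Measure.map γ μ)
    (hlaw₂ : Measure.map γ₂ μ = Measure.map γ μ)
    (hXint : Integrable X μ)
    (hdec : ∀ᵐ ω ∂μ, 2 * γ ω = γ₁ ω + γ₂ ω + X ω - ∫ ω', X ω' ∂μ)
    (lam : ℝ) (hlam : 0 < lam)
    (hXexp : ∫⁻ ω, ENNReal.ofReal (Real.exp (lam * X ω)) ∂μ = ⊤) :
    (∫⁻ ω, ENNReal.ofReal (Real.exp (4 * lam * γ ω)) ∂μ = ⊤) ∨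
    (∫⁻ ω, ENNReal.ofReal (Real.exp (-2 * lam * γ ω)) ∂μ = ⊤) := by
  by_contra h
  push_neg at h
  obtain ⟨h1, h2⟩ := h
  set m : ℝ := ∫ ω', X ω' ∂μ with hm
  -- the two factors for Cauchy-Schwarz
  set f : Ω → ENNReal := fun ω => ENNReal.ofReal (Real.exp (2 * lam * γ ω)) with hf
  set g : Ω → ENNReal := fun ω =>
    ENNReal.ofReal (Real.exp (-lam * γ₁ ω - lam * γ₂ ω)) with hg
  have hfm : Measurable f := by
    exact (ENNReal.measurable_ofReal.comp (Real.measurable_exp.comp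
      ((measurable_const.mul hγ))))
  have hgm : Measurable g := by
    exact (ENNReal.measurable_ofReal.comp (Real.measurable_exp.comp
      (((measurable_const.mul hγ₁).sub (measurable_const.mul hγ₂)))))
  -- pointwise a.e. identity: e^{lam X} = e^{lam m} * f * g
  have hpt : ∀ᵐ ω ∂μ, ENNReal.ofReal (Real.exp (lam * X ω))
      = ENNReal.ofReal (Real.exp (lam * m)) * (f ω * g ω) := by
    filter_upwards [hdec] with ω hω
    have hx : lam * X ω = lam * m + (2 * lam * γ ω + (-lam * γ₁ ω - lam * γ₂ ω)) := by
      have : X ω = 2 * γ ω - γ₁ ω - γ₂ ω + m := by linarith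
      rw [this]; ring
    rw [hx, Real.exp_add, Real.exp_add,
      ENNReal.ofReal_mul (Real.exp_nonneg _), ENNReal.ofReal_mul (Real.exp_nonneg _)]
  have hCS : ∫⁻ ω, f ω * g ω ∂μ ≤
      (∫⁻ ω, f ω ^ (2 : ℝ) ∂μ) ^ (1 / (2:ℝ)) * (∫⁻ ω, g ω ^ (2 : ℝ) ∂μ) ^ (1 / (2:ℝ)) :=
    ENNReal.lintegral_mul_le_Lp_mul_Lq μ ⟨by norm_num, by norm_num, by norm_num⟩
      hfm.aemeasurable hgm.aemeasurable
  -- compute ∫ f^2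
  have hfsq : ∫⁻ ω, f ω ^ (2 : ℝ) ∂μ
      = ∫⁻ ω, ENNReal.ofReal (Real.exp (4 * lam * γ ω)) ∂μ := by
    refine lintegral_congr fun ω => ?_
    rw [hf]
    rw [ENNReal.ofReal_rpow_of_nonneg (Real.exp_nonneg _) (by norm_num : (0:ℝ) ≤ 2),
      ← Real.exp_mul]
    norm_num
    ring_nf
  -- compute ∫ g^2 via independence and equal laws
  have hgsq : ∫⁻ ω, g ω ^ (2 : ℝ) ∂μ
      = (∫⁻ ω, ENNReal.ofReal (Real.exp (-2 * lam * γ ω)) ∂μ) ^ 2 := by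
    have e1 : ∀ ω, g ω ^ (2 : ℝ)
        = ENNReal.ofReal (Real.exp (-2 * lam * γ₁ ω))
          * ENNReal.ofReal (Real.exp (-2 * lam * γ₂ ω)) := by
      intro ω
      rw [hg]
      rw [ENNReal.ofReal_rpow_of_nonneg (Real.exp_nonneg _) (by norm_num : (0:ℝ) ≤ 2),
        ← Real.exp_mul, ← ENNReal.ofReal_mul (Real.exp_nonneg _), ← Real.exp_add]
      norm_num
      ring_nf
    simp_rw [e1]
    have hcomp : IndepFun (fun ω => ENNReal.ofReal (Real.exp (-2 * lam * γ₁ ω)))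
        (fun ω => ENNReal.ofReal (Real.exp (-2 * lam * γ₂ ω))) μ := by
      exact hindep.comp
        (ENNReal.measurable_ofReal.comp (Real.measurable_exp.comp (measurable_const.mul measurable_id)))
        (ENNReal.measurable_ofReal.comp (Real.measurable_exp.comp (measurable_const.mul measurable_id)))
    rw [ProbabilityTheory.lintegral_mul_eq_lintegral_mul_lintegral_of_indepFun''
      (f := fun ω => ENNReal.ofReal (Real.exp (-2 * lam * γ₁ ω)))
      (g := fun ω => ENNReal.ofReal (Real.exp (-2 * lam * γ₂ ω)))
      (((measurable_const.mul hγ₁).exp.ennreal_ofReal).aemeasurable)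
      (((measurable_const.mul hγ₂).exp.ennreal_ofReal).aemeasurable) hcomp]
    have hmap : ∀ (Y : Ω → ℝ), Measurable Y → Measure.map Y μ = Measure.map γ μ →
        ∫⁻ ω, ENNReal.ofReal (Real.exp (-2 * lam * Y ω)) ∂μ
          = ∫⁻ ω, ENNReal.ofReal (Real.exp (-2 * lam * γ ω)) ∂μ := by
      intro Y hY hl
      have hmeas : Measurable fun x : ℝ => ENNReal.ofReal (Real.exp (-2 * lam * x)) :=
        ENNReal.measurable_ofReal.comp (Real.measurable_exp.comp (measurable_const.mul measurable_id))
      rw [← lintegral_map hmeas hY, hl, lintegral_map hmeas hγ]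
    rw [hmap γ₁ hγ₁ hlaw₁, hmap γ₂ hγ₂ hlaw₂, sq]
  -- conclude finiteness of ∫ e^{lam X}, contradiction
  have hfin : ∫⁻ ω, ENNReal.ofReal (Real.exp (lam * X ω)) ∂μ < ⊤ := by
    calc ∫⁻ ω, ENNReal.ofReal (Real.exp (lam * X ω)) ∂μ
        = ∫⁻ ω, ENNReal.ofReal (Real.exp (lam * m)) * (f ω * g ω) ∂μ :=
          lintegral_congr_ae hpt
      _ = ENNReal.ofReal (Real.exp (lam * m)) * ∫⁻ ω, f ω * g ω ∂μ :=
          lintegral_const_mul _ (hfm.mul hgm)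
      _ ≤ ENNReal.ofReal (Real.exp (lam * m)) *
          ((∫⁻ ω, f ω ^ (2:ℝ) ∂μ) ^ (1/(2:ℝ)) * (∫⁻ ω, g ω ^ (2:ℝ) ∂μ) ^ (1/(2:ℝ))) :=
          mul_le_mul_right hCS _
      _ < ⊤ := by
          rw [hfsq, hgsq]
          refine ENNReal.mul_lt_top ENNReal.ofReal_lt_top ?_
          refine ENNReal.mul_lt_top ?_ ?_
          · exact ENNReal.rpow_lt_top_of_nonneg (by norm_num) h1
          · exact ENNReal.rpow_lt_top_of_nonneg (by norm_num) (ENNReal.pow_ne_top h2)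
  exact absurd hXexp hfin.ne
end

section
/- Let X_n be a sequence of real random variables such that X_n is nondecreasing in n (pointwise), let a_n = exp(n^{3/4}), and suppose that almost surely (log a_n / a_n) X_{⌊a_n⌋} → L as n → ∞ for some constant L ≥ 0. Then almost surely (log n / n) X_n → L as n → ∞. -/
open MeasureTheory Real Filter

/-- The subsequence `a_n = exp(n^{3/4})`. -/
noncomputable def aSeq (n : ℕ) : ℝ := Real.exp ((n : ℝ) ^ ((3 : ℝ) / 4))

noncomputable def cSeq (n : ℕ) : ℝ := Real.log (aSeq n) / aSeq n

noncomputable def kSeq (n : ℕ) : ℕ := ⌊(Real.log n) ^ ((4 : ℝ) / 3)⌋₊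

lemma aSeq_pos (n : ℕ) : 0 < aSeq n := Real.exp_pos _

lemma log_aSeq (n : ℕ) : Real.log (aSeq n) = (n : ℝ) ^ ((3 : ℝ) / 4) := Real.log_exp _

lemma exp_one_le_aSeq {n : ℕ} (hn : 1 ≤ n) : Real.exp 1 ≤ aSeq n := by
  apply Real.exp_le_exp.2
  have : (1:ℝ) ≤ (n:ℝ) := by exact_mod_cast hn
  calc (1:ℝ) = 1 ^ ((3:ℝ)/4) := (Real.one_rpow _).symm
    _ ≤ (n:ℝ) ^ ((3:ℝ)/4) := Real.rpow_le_rpow (by norm_num) this (by norm_num)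

lemma cSeq_pos {n : ℕ} (hn : 1 ≤ n) : 0 < cSeq n := by
  apply div_pos _ (aSeq_pos n)
  rw [log_aSeq]
  have : (0:ℝ) < (n:ℝ) := by exact_mod_cast hn
  positivity

lemma one_le_log {n : ℕ} (hn : 3 ≤ n) : 1 ≤ Real.log n := by
  rw [Real.le_log_iff_exp_le (by positivity)]
  calc Real.exp 1 ≤ 2.7182818286 := Real.exp_one_lt_d9.le
    _ ≤ 3 := by norm_num
    _ ≤ (n:ℝ) := by exact_mod_cast hn

lemma one_le_kSeq {n : ℕ} (hn : 3 ≤ n) : 1 ≤ kSeq n := by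
  rw [kSeq, Nat.le_floor_iff (by positivity)]
  push_cast
  calc (1:ℝ) = 1 ^ ((4:ℝ)/3) := (Real.one_rpow _).symm
    _ ≤ (Real.log n) ^ ((4:ℝ)/3) :=
      Real.rpow_le_rpow (by norm_num) (one_le_log hn) (by norm_num)

lemma aSeq_kSeq_le {n : ℕ} (hn : 3 ≤ n) : aSeq (kSeq n) ≤ n := by
  have hl : (0:ℝ) ≤ Real.log n := le_trans zero_le_one (one_le_log hn)
  have hu : (0:ℝ) ≤ (Real.log n) ^ ((4:ℝ)/3) := Real.rpow_nonneg hl _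
  have h1 : (kSeq n : ℝ) ≤ (Real.log n) ^ ((4:ℝ)/3) := Nat.floor_le hu
  have h2 : (kSeq n : ℝ) ^ ((3:ℝ)/4) ≤ Real.log n := by
    calc (kSeq n : ℝ) ^ ((3:ℝ)/4) ≤ ((Real.log n) ^ ((4:ℝ)/3)) ^ ((3:ℝ)/4) :=
        Real.rpow_le_rpow (Nat.cast_nonneg _) h1 (by norm_num)
      _ = Real.log n := by
        rw [← Real.rpow_mul hl]; norm_num
  calc aSeq (kSeq n) ≤ Real.exp (Real.log n) := Real.exp_le_exp.2 h2
    _ = n := Real.exp_log (by positivity)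

lemma lt_aSeq_kSeq_succ {n : ℕ} (hn : 3 ≤ n) : (n : ℝ) < aSeq (kSeq n + 1) := by
  have hl : (0:ℝ) ≤ Real.log n := le_trans zero_le_one (one_le_log hn)
  have h1 : (Real.log n) ^ ((4:ℝ)/3) < (kSeq n : ℝ) + 1 := Nat.lt_floor_add_one _
  have heq : Real.log n = ((Real.log n) ^ ((4:ℝ)/3)) ^ ((3:ℝ)/4) := by
    rw [← Real.rpow_mul hl]; norm_num
  have h2 : Real.log n < ((kSeq n : ℝ) + 1) ^ ((3:ℝ)/4) := by
    rw [heq]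
    exact Real.rpow_lt_rpow (Real.rpow_nonneg hl _) h1 (by norm_num)
  have h3 : (n:ℝ) = Real.exp (Real.log n) := (Real.exp_log (by positivity)).symm
  rw [h3, aSeq]
  push_cast
  exact Real.exp_lt_exp.2 h2

lemma kSeq_tendsto : Tendsto kSeq atTop atTop := by
  apply tendsto_nat_floor_atTop.comp
  apply (tendsto_rpow_atTop (by norm_num : (0:ℝ) < 4/3)).comp
  exact Real.tendsto_log_atTop.comp tendsto_natCast_atTop_atTop

lemma rpow_succ_sub_le {k : ℕ} (hk : 1 ≤ k) :
    ((k:ℝ) + 1) ^ ((3:ℝ)/4) - (k:ℝ) ^ ((3:ℝ)/4) ≤ (3/4) * (k:ℝ) ^ (-(1/4):ℝ) := by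
  have hk0 : (0:ℝ) < k := by exact_mod_cast hk
  have h1 : ((k:ℝ) + 1) = (k:ℝ) * (1 + 1/(k:ℝ)) := by field_simp
  have h2 : ((k:ℝ) + 1) ^ ((3:ℝ)/4) ≤ (k:ℝ) ^ ((3:ℝ)/4) * (1 + (3/4) * (1/(k:ℝ))) := by
    rw [h1, Real.mul_rpow hk0.le (by positivity)]
    apply mul_le_mul_of_nonneg_left _ (Real.rpow_nonneg hk0.le _)
    have h0 : (0:ℝ) ≤ 1/(k:ℝ) := by positivity
    exact rpow_one_add_le_one_add_mul_self (by linarith) (by norm_num) (by norm_num)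
  have h3 : (k:ℝ) ^ ((3:ℝ)/4) * (1/(k:ℝ)) = (k:ℝ) ^ (-(1:ℝ)/4) := by
    rw [one_div, ← Real.rpow_neg_one (k:ℝ), ← Real.rpow_add hk0]
    norm_num
  nlinarith [Real.rpow_nonneg hk0.le ((3:ℝ)/4)]

lemma cSeq_ratio_eq {k : ℕ} (hk : 1 ≤ k) :
    cSeq k / cSeq (k + 1) =
      ((k:ℝ) ^ ((3:ℝ)/4) / ((k:ℝ) + 1) ^ ((3:ℝ)/4)) *
        Real.exp (((k:ℝ) + 1) ^ ((3:ℝ)/4) - (k:ℝ) ^ ((3:ℝ)/4)) := by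
  have hk0 : (0:ℝ) < k := by exact_mod_cast hk
  rw [cSeq, cSeq, aSeq, aSeq, Real.log_exp, Real.log_exp, Real.exp_sub]
  push_cast
  field_simp

lemma cSeq_ratio_tendsto :
    Tendsto (fun k : ℕ => cSeq k / cSeq (k + 1)) atTop (nhds 1) := by
  have hA : Tendsto (fun k : ℕ => (k:ℝ) ^ ((3:ℝ)/4) / ((k:ℝ) + 1) ^ ((3:ℝ)/4)) atTop (nhds 1) := by
    have h1 : Tendsto (fun k : ℕ => (k:ℝ) / ((k:ℝ) + 1)) atTop (nhds 1) := by
      have := tendsto_natCast_div_add_atTop (1:ℝ)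
      exact this
    have h2 : Tendsto (fun x : ℝ => x ^ ((3:ℝ)/4)) (nhds 1) (nhds 1) := by
      have := (Real.continuousAt_rpow_const 1 ((3:ℝ)/4) (Or.inl one_ne_zero)).tendsto
      simpa using this
    have := h2.comp h1
    apply this.congr'
    filter_upwards [eventually_ge_atTop 1] with k hk
    have hk0 : (0:ℝ) ≤ k := Nat.cast_nonneg _
    simp only [Function.comp]
    rw [Real.div_rpow hk0 (by positivity)]
  have hD : Tendsto (fun k : ℕ => ((k:ℝ) + 1) ^ ((3:ℝ)/4) - (k:ℝ) ^ ((3:ℝ)/4)) atTop (nhds 0) := by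
    have hU : Tendsto (fun k : ℕ => (3/4:ℝ) * (k:ℝ) ^ (-(1/4):ℝ)) atTop (nhds 0) := by
      have h := ((tendsto_rpow_neg_atTop (by norm_num : (0:ℝ) < 1/4)).comp
        tendsto_natCast_atTop_atTop).const_mul (3/4:ℝ)
      simpa [Function.comp] using h
    apply tendsto_of_tendsto_of_tendsto_of_le_of_le' tendsto_const_nhds hU
    · filter_upwards [eventually_ge_atTop 1] with k hk
      have hk0 : (0:ℝ) ≤ k := Nat.cast_nonneg _
      have : (k:ℝ) ^ ((3:ℝ)/4) ≤ ((k:ℝ)+1) ^ ((3:ℝ)/4) :=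
        Real.rpow_le_rpow hk0 (by linarith) (by norm_num)
      linarith
    · filter_upwards [eventually_ge_atTop 1] with k hk
      exact rpow_succ_sub_le hk
  have hB : Tendsto (fun k : ℕ => Real.exp (((k:ℝ) + 1) ^ ((3:ℝ)/4) - (k:ℝ) ^ ((3:ℝ)/4)))
      atTop (nhds 1) := by
    have h := (Real.continuous_exp.tendsto 0).comp hD
    rw [Real.exp_zero] at h
    exact h
  have := hA.mul hB
  rw [one_mul] at this
  apply this.congr'
  filter_upwards [eventually_ge_atTop 1] with k hk
  exact (cSeq_ratio_eq hk).symm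

lemma cSeq_inv_ratio_tendsto :
    Tendsto (fun k : ℕ => cSeq (k + 1) / cSeq k) atTop (nhds 1) := by
  have h := cSeq_ratio_tendsto.inv₀ one_ne_zero
  rw [inv_one] at h
  apply h.congr
  intro k
  rw [inv_div]

lemma log_div_le {x y : ℝ} (hx : Real.exp 1 ≤ x) (hxy : x ≤ y) :
    Real.log y / y ≤ Real.log x / x :=
  Real.log_div_self_antitoneOn hx (hx.trans hxy) hxy

/-- if `X_n` is pointwise nondecreasing and almost surely
`(log a_n / a_n) X_{⌊a_n⌋} → L` with `L ≥ 0`, then almost surely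
`(log n / n) X_n → L`. -/
theorem tendsto_full_of_tendsto_subseq
    {Ω : Type*} [MeasurableSpace Ω] (μ : Measure Ω) [IsProbabilityMeasure μ]
    (X : ℕ → Ω → ℝ) (hmono : ∀ ω, Monotone fun n => X n ω)
    (L : ℝ) (hL : 0 ≤ L)
    (hconv : ∀ᵐ ω ∂μ, Tendsto
      (fun n : ℕ => Real.log (aSeq n) / aSeq n * X ⌊aSeq n⌋₊ ω)
      atTop (nhds L)) :
    ∀ᵐ ω ∂μ, Tendsto (fun n : ℕ => Real.log n / n * X n ω) atTop (nhds L) := by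
  filter_upwards [hconv] with ω h
  have h' : Tendsto (fun k : ℕ => cSeq k * X ⌊aSeq k⌋₊ ω) atTop (nhds L) := h
  have hk1 : Tendsto (fun n : ℕ => kSeq n + 1) atTop atTop :=
    tendsto_atTop_mono (fun n => Nat.le_succ _) kSeq_tendsto
  -- bounds on log n / n, eventually
  have hdn : ∀ᶠ n : ℕ in atTop,
      cSeq (kSeq n + 1) ≤ Real.log n / n ∧ Real.log n / n ≤ cSeq (kSeq n) := by
    filter_upwards [eventually_ge_atTop 3] with n hn
    have he : Real.exp 1 ≤ aSeq (kSeq n) := exp_one_le_aSeq (one_le_kSeq hn)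
    have ha1 : aSeq (kSeq n) ≤ (n : ℝ) := aSeq_kSeq_le hn
    have ha2 : (n : ℝ) ≤ aSeq (kSeq n + 1) := (lt_aSeq_kSeq_succ hn).le
    constructor
    · exact log_div_le (he.trans ha1) ha2
    · exact log_div_le he ha1
  -- ratio 1 : (log n / n) / cSeq (kSeq n) → 1
  have hr1 : Tendsto (fun n : ℕ => (Real.log n / n) / cSeq (kSeq n)) atTop (nhds 1) := by
    apply tendsto_of_tendsto_of_tendsto_of_le_of_le'
      (cSeq_inv_ratio_tendsto.comp kSeq_tendsto) tendsto_const_nhds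
    · filter_upwards [hdn, eventually_ge_atTop 3] with n hn h3
      have hc : 0 < cSeq (kSeq n) := cSeq_pos (one_le_kSeq h3)
      exact div_le_div_of_nonneg_right hn.1 hc.le |>.trans_eq rfl
    · filter_upwards [hdn, eventually_ge_atTop 3] with n hn h3
      have hc : 0 < cSeq (kSeq n) := cSeq_pos (one_le_kSeq h3)
      exact (div_le_one hc).2 hn.2
  -- ratio 2 : (log n / n) / cSeq (kSeq n + 1) → 1
  have hr2 : Tendsto (fun n : ℕ => (Real.log n / n) / cSeq (kSeq n + 1)) atTop (nhds 1) := by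
    apply tendsto_of_tendsto_of_tendsto_of_le_of_le' tendsto_const_nhds
      (cSeq_ratio_tendsto.comp kSeq_tendsto)
    · filter_upwards [hdn, eventually_ge_atTop 3] with n hn h3
      have hc : 0 < cSeq (kSeq n + 1) := cSeq_pos (Nat.le_succ_of_le (one_le_kSeq h3))
      exact (one_le_div hc).2 hn.1
    · filter_upwards [hdn, eventually_ge_atTop 3] with n hn h3
      have hc : 0 < cSeq (kSeq n + 1) := cSeq_pos (Nat.le_succ_of_le (one_le_kSeq h3))
      exact div_le_div_of_nonneg_right hn.2 hc.le
  -- lower and upper sandwiching sequences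
  have hlow : Tendsto (fun n : ℕ =>
      ((Real.log n / n) / cSeq (kSeq n)) * (cSeq (kSeq n) * X ⌊aSeq (kSeq n)⌋₊ ω))
      atTop (nhds L) := by
    have := hr1.mul (h'.comp kSeq_tendsto)
    rwa [one_mul] at this
  have hup : Tendsto (fun n : ℕ =>
      ((Real.log n / n) / cSeq (kSeq n + 1)) * (cSeq (kSeq n + 1) * X ⌊aSeq (kSeq n + 1)⌋₊ ω))
      atTop (nhds L) := by
    have := hr2.mul (h'.comp hk1)
    rwa [one_mul] at this
  apply tendsto_of_tendsto_of_tendsto_of_le_of_le' hlow hup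
  · filter_upwards [eventually_ge_atTop 3] with n hn
    have hc : 0 < cSeq (kSeq n) := cSeq_pos (one_le_kSeq hn)
    have heq : ((Real.log n / n) / cSeq (kSeq n)) * (cSeq (kSeq n) * X ⌊aSeq (kSeq n)⌋₊ ω)
        = (Real.log n / n) * X ⌊aSeq (kSeq n)⌋₊ ω := by
      field_simp
    rw [heq]
    have hd0 : 0 ≤ Real.log n / (n : ℝ) := by
      apply div_nonneg _ (Nat.cast_nonneg _)
      exact le_trans zero_le_one (one_le_log hn)
    have hfl : ⌊aSeq (kSeq n)⌋₊ ≤ n := by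
      have := Nat.floor_le_floor (aSeq_kSeq_le hn)
      simpa using this
    exact mul_le_mul_of_nonneg_left (hmono ω hfl) hd0
  · filter_upwards [eventually_ge_atTop 3] with n hn
    have hc : 0 < cSeq (kSeq n + 1) := cSeq_pos (Nat.le_succ_of_le (one_le_kSeq hn))
    have heq : ((Real.log n / n) / cSeq (kSeq n + 1)) * (cSeq (kSeq n + 1) * X ⌊aSeq (kSeq n + 1)⌋₊ ω)
        = (Real.log n / n) * X ⌊aSeq (kSeq n + 1)⌋₊ ω := by
      field_simp
    rw [heq]
    have hd0 : 0 ≤ Real.log n / (n : ℝ) := by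
      apply div_nonneg _ (Nat.cast_nonneg _)
      exact le_trans zero_le_one (one_le_log hn)
    have hfl : n ≤ ⌊aSeq (kSeq n + 1)⌋₊ := Nat.le_floor (lt_aSeq_kSeq_succ hn).le
    exact mul_le_mul_of_nonneg_left (hmono ω hfl) hd0
end

section
/- Let β be a standard 4-dimensional Brownian motion started at 0. For every a ≥ 0 and every integer k ≥ 1 with a ≥ k, ∫₀¹ E[(a + |log ‖β_t‖|)^k] dt ≤ C k a^k for a universal constant C > 0. -/
open MeasureTheory ProbabilityTheory Real Filter
open scoped NNReal

/-- `B` is a standard Brownian motion on `ℝ⁴` (started at `0`) under the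
probability measure `μ`: continuous paths, independent Gaussian increments,
with the four coordinates independent. -/
def IsBM {Ω : Type*} [MeasurableSpace Ω] (μ : Measure Ω)
    (B : ℝ → Ω → EuclideanSpace ℝ (Fin 4)) : Prop :=
  (∀ ω, B 0 ω = 0) ∧
  (∀ ω, Continuous fun t => B t ω) ∧
  (∀ t, Measurable (B t)) ∧
  (∀ (m : ℕ) (t : Fin (m + 1) → ℝ), Monotone t → 0 ≤ t 0 →
    ProbabilityTheory.iIndepFun
      (fun p : Fin m × Fin 4 => fun ω =>
        B (t p.1.succ) ω p.2 - B (t p.1.castSucc) ω p.2) μ) ∧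
  (∀ s t : ℝ, 0 ≤ s → s ≤ t → ∀ i : Fin 4,
    Measure.map (fun ω => B t ω i - B s ω i) μ
      = ProbabilityTheory.gaussianReal 0 (Real.toNNReal (t - s)))

/-!
For `k ≤ a` one has `(a + y)^k ≤ a^k e^y`, so the integrand is at most `a^k (‖β_t‖ + ‖β_t‖⁻¹)`.
The first term is at most the sum of the absolute values of the coordinates. For the second,
`|x₀| |x₁| ≤ ‖x‖²` gives `‖x‖⁻¹ ≤ |x₀|^(-1/2) |x₁|^(-1/2)`, whose expectation factors by
independence of the coordinates into the square of the Gaussian absolute moment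
`E |β_t⁰|^(-1/2) = (2t)^(-1/4) Γ(1/4) / √π`. Hence
`E (a + |log ‖β_t‖|)^k ≤ a^k (4 + Γ(1/4)² / π · t^(-1/2))`, which is integrable on `(0, 1]`.
-/

lemma integral_abs_rpow_gaussianReal {v : ℝ≥0} (hv : v ≠ 0) {p : ℝ} (hp : -1 < p) :
    ∫ x, |x| ^ p ∂gaussianReal 0 v = (2 * v) ^ (p / 2) * Gamma ((p + 1) / 2) / √π := by
  have h2v : (0 : ℝ) < 2 * v := by positivity
  have hpdf : ∀ x : ℝ, gaussianPDFReal 0 v x * |x| ^ p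
      = (√(2 * π * v))⁻¹ * (|x| ^ p * exp (-(2 * (v : ℝ))⁻¹ * |x| ^ (2 : ℝ))) := by
    intro x
    rw [gaussianPDFReal, rpow_two, sq_abs, sub_zero, neg_div, ← div_eq_inv_mul, neg_mul,
      ← div_eq_inv_mul]
    ring_nf
  simp_rw [integral_gaussianReal_eq_integral_smul hv, smul_eq_mul, hpdf,
    integral_comp_abs
      (f := fun y => (√(2 * π * v))⁻¹ * (y ^ p * exp (-(2 * (v : ℝ))⁻¹ * y ^ (2 : ℝ)))),
    integral_const_mul, integral_rpow_mul_exp_neg_mul_rpow two_pos hp (inv_pos.2 h2v)]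
  have hsplit : (2 * (v : ℝ)) ^ (-(-(p + 1) / 2)) = (2 * v) ^ (p / 2) * √(2 * v) := by
    rw [sqrt_eq_rpow, ← rpow_add h2v]; ring_nf
  rw [inv_rpow h2v.le, ← rpow_neg h2v.le, hsplit, show 2 * π * (v : ℝ) = π * (2 * v) by ring,
    sqrt_mul' _ h2v.le]
  field_simp

lemma integrable_abs_rpow_gaussianReal {v : ℝ≥0} (hv : v ≠ 0) {p : ℝ} (hp : -1 < p) :
    Integrable (fun x => |x| ^ p) (gaussianReal 0 v) := by
  refine Integrable.of_integral_ne_zero ?_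
  have : 0 < Gamma ((p + 1) / 2) := Gamma_pos_of_pos (by linarith)
  rw [integral_abs_rpow_gaussianReal hv hp]
  positivity

lemma pow_add_le_pow_mul_exp {a y : ℝ} {k : ℕ} (hka : (k : ℝ) ≤ a) (hy : 0 ≤ y) :
    (a + y) ^ k ≤ a ^ k * exp y := by
  rcases k.eq_zero_or_pos with rfl | hk
  · simpa using one_le_exp hy
  have ha : 0 < a := (Nat.cast_pos.2 hk).trans_le hka
  calc (a + y) ^ k = a ^ k * (1 + y / a) ^ k := by rw [← mul_pow]; field_simp
    _ ≤ a ^ k * exp (y / a) ^ k := by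
      gcongr
      linarith [add_one_le_exp (y / a)]
    _ = a ^ k * exp (k * y / a) := by rw [← exp_nat_mul, mul_div_assoc]
    _ ≤ a ^ k * exp y := by
      gcongr
      rw [div_le_iff₀ ha, mul_comm y]
      exact mul_le_mul_of_nonneg_right hka hy

lemma exp_abs_log_le {x : ℝ} (hx : 0 < x) : exp |log x| ≤ x + x⁻¹ := by
  rcases le_total 0 (log x) with h | h
  · rw [abs_of_nonneg h, exp_log hx]
    linarith [inv_pos.2 hx]
  · rw [abs_of_nonpos h, exp_neg, exp_log hx]
    linarith

namespace EuclideanSpace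

variable {ι : Type*} [Fintype ι] (x : EuclideanSpace ℝ ι)

lemma norm_le_sum_abs : ‖x‖ ≤ ∑ i, |x i| := by
  refine le_of_sq_le_sq ?_ (Finset.sum_nonneg fun i _ => abs_nonneg (x i))
  rw [real_norm_sq_eq]
  simp_rw [← sq_abs (x _)]
  exact Finset.sum_sq_le_sq_sum_of_nonneg fun i _ => abs_nonneg (x i)

lemma abs_mul_abs_le_norm_sq {i j : ι} (hij : i ≠ j) : |x i| * |x j| ≤ ‖x‖ ^ 2 := by
  have : x i ^ 2 + x j ^ 2 ≤ ‖x‖ ^ 2 := by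
    classical
    rw [real_norm_sq_eq, ← Finset.sum_pair (f := fun l => x l ^ 2) hij]
    exact Finset.sum_le_sum_of_subset_of_nonneg (Finset.subset_univ _)
      fun _ _ _ => sq_nonneg _
  nlinarith [two_mul_le_add_sq |x i| |x j|, sq_abs (x i), sq_abs (x j), abs_nonneg (x i),
    abs_nonneg (x j)]

lemma norm_inv_le_abs_rpow_mul_abs_rpow {i j : ι} (hij : i ≠ j) (hi : x i ≠ 0) (hj : x j ≠ 0) :
    ‖x‖⁻¹ ≤ |x i| ^ (-1 / 2 : ℝ) * |x j| ^ (-1 / 2 : ℝ) := by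
  have hij_pos : 0 < |x i| * |x j| := by positivity
  calc ‖x‖⁻¹ = (‖x‖ ^ 2) ^ (-1 / 2 : ℝ) := by
        rw [← rpow_natCast, ← rpow_mul (norm_nonneg x)]
        norm_num [rpow_neg_one]
    _ ≤ (|x i| * |x j|) ^ (-1 / 2 : ℝ) :=
        rpow_le_rpow_of_nonpos hij_pos (abs_mul_abs_le_norm_sq x hij) (by norm_num)
    _ = |x i| ^ (-1 / 2 : ℝ) * |x j| ^ (-1 / 2 : ℝ) := mul_rpow (abs_nonneg _) (abs_nonneg _)

lemma pow_add_abs_log_norm_le {a : ℝ} {k : ℕ} (hka : (k : ℝ) ≤ a) {i j : ι} (hij : i ≠ j)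
    (hi : x i ≠ 0) (hj : x j ≠ 0) :
    (a + |log ‖x‖|) ^ k ≤ a ^ k * (∑ l, |x l| + |x i| ^ (-1 / 2 : ℝ) * |x j| ^ (-1 / 2 : ℝ)) := by
  have hx : 0 < ‖x‖ := norm_pos_iff.2 fun h => hi (by simp [h])
  have ha : 0 ≤ a := (Nat.cast_nonneg k).trans hka
  calc (a + |log ‖x‖|) ^ k ≤ a ^ k * exp |log ‖x‖| := pow_add_le_pow_mul_exp hka (abs_nonneg _)
    _ ≤ a ^ k * (‖x‖ + ‖x‖⁻¹) := by gcongr; exact exp_abs_log_le hx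
    _ ≤ _ := by
      gcongr
      exacts [norm_le_sum_abs x, norm_inv_le_abs_rpow_mul_abs_rpow x hij hi hj]

end EuclideanSpace

namespace IsBM

variable {Ω : Type*} [MeasurableSpace Ω] {μ : Measure Ω}
  {B : ℝ → Ω → EuclideanSpace ℝ (Fin 4)}

lemma measurable_coord (hB : IsBM μ B) (t : ℝ) (i : Fin 4) : Measurable fun ω => B t ω i :=
  (measurable_pi_apply i).comp ((WithLp.measurable_ofLp 2 _).comp (hB.2.2.1 t))

lemma map_coord (hB : IsBM μ B) {t : ℝ} (ht : 0 ≤ t) (i : Fin 4) :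
    μ.map (fun ω => B t ω i) = gaussianReal 0 t.toNNReal := by
  simpa [hB.1] using hB.2.2.2.2 0 t le_rfl ht i

lemma indepFun_coord (hB : IsBM μ B) {t : ℝ} (ht : 0 ≤ t) {i j : Fin 4} (hij : i ≠ j) :
    IndepFun (fun ω => B t ω i) (fun ω => B t ω j) μ := by
  have hmono : Monotone ![0, t] := Fin.monotone_iff_le_succ.2 fun l => by
    fin_cases l; simpa using ht
  simpa [hB.1] using (hB.2.2.2.1 1 ![0, t] hmono le_rfl).indepFun
    (i := (0, i)) (j := (0, j)) (by simpa using hij)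

lemma ae_coord_ne_zero (hB : IsBM μ B) {t : ℝ} (ht : 0 < t) (i : Fin 4) :
    ∀ᵐ ω ∂μ, B t ω i ≠ 0 := by
  have hnull : μ.map (fun ω => B t ω i) {0} = 0 := by
    rw [hB.map_coord ht.le i]
    exact gaussianReal_absolutelyContinuous 0 (by simpa using ht) (by simp)
  rw [Measure.map_apply (hB.measurable_coord t i) (measurableSet_singleton 0)] at hnull
  exact measure_eq_zero_iff_ae_notMem.1 hnull

lemma integral_abs_coord_rpow (hB : IsBM μ B) {t : ℝ} (ht : 0 < t) (i : Fin 4) {p : ℝ}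
    (hp : -1 < p) :
    ∫ ω, |B t ω i| ^ p ∂μ = (2 * t) ^ (p / 2) * Gamma ((p + 1) / 2) / √π := by
  have hv : t.toNNReal ≠ 0 := by simpa using ht
  rw [← integral_map (f := fun x => |x| ^ p) (hB.measurable_coord t i).aemeasurable
      (measurable_abs.pow_const p).aestronglyMeasurable, hB.map_coord ht.le i,
    integral_abs_rpow_gaussianReal hv hp, Real.coe_toNNReal t ht.le]

lemma integrable_abs_coord_rpow (hB : IsBM μ B) {t : ℝ} (ht : 0 < t) (i : Fin 4) {p : ℝ}
    (hp : -1 < p) :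
    Integrable (fun ω => |B t ω i| ^ p) μ := by
  have hv : t.toNNReal ≠ 0 := by simpa using ht
  have := integrable_abs_rpow_gaussianReal hv hp
  rw [← hB.map_coord ht.le i,
    integrable_map_measure (measurable_abs.pow_const p).aestronglyMeasurable
    (hB.measurable_coord t i).aemeasurable] at this
  exact this

lemma integrable_abs_coord (hB : IsBM μ B) {t : ℝ} (ht : 0 < t) (i : Fin 4) :
    Integrable (fun ω => |B t ω i|) μ := by
  simpa using hB.integrable_abs_coord_rpow ht i (p := 1) (by norm_num)

lemma integral_sum_abs_coord_le (hB : IsBM μ B) {t : ℝ} (ht : 0 < t) (ht1 : t ≤ 1) :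
    ∫ ω, ∑ l, |B t ω l| ∂μ ≤ 4 := by
  have hmoment : ∀ l, ∫ ω, |B t ω l| ∂μ = √(2 * t) / √π := fun l => by
    simpa [sqrt_eq_rpow] using hB.integral_abs_coord_rpow ht l (p := 1) (by norm_num)
  have hle : √(2 * t) / √π ≤ 1 :=
    div_le_one_of_le₀ (sqrt_le_sqrt (by linarith [pi_gt_three])) (sqrt_nonneg π)
  rw [integral_finsetSum _ fun l _ => hB.integrable_abs_coord ht l]
  simp only [hmoment, Finset.sum_const, Finset.card_univ, Fintype.card_fin, nsmul_eq_mul]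
  linarith

lemma indepFun_abs_rpow_coord (hB : IsBM μ B) {t : ℝ} (ht : 0 ≤ t) {i j : Fin 4} (hij : i ≠ j)
    (p : ℝ) : IndepFun (fun ω => |B t ω i| ^ p) (fun ω => |B t ω j| ^ p) μ :=
  (hB.indepFun_coord ht hij).comp (measurable_abs.pow_const p) (measurable_abs.pow_const p)

lemma integral_abs_rpow_mul_abs_rpow_coord_le (hB : IsBM μ B) {t : ℝ} (ht : 0 < t) :
    ∫ ω, |B t ω 0| ^ (-1 / 2 : ℝ) * |B t ω 1| ^ (-1 / 2 : ℝ) ∂μ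
      ≤ Gamma (1 / 4) ^ 2 / π * t ^ (-1 / 2 : ℝ) := by
  have hmoment : ∀ l, ∫ ω, |B t ω l| ^ (-1 / 2 : ℝ) ∂μ
      = (2 * t) ^ (-1 / 4 : ℝ) * Gamma (1 / 4) / √π := fun l => by
    rw [hB.integral_abs_coord_rpow ht l (by norm_num)]
    norm_num
  have hpow : (2 * t) ^ (-1 / 4 : ℝ) * (2 * t) ^ (-1 / 4 : ℝ) ≤ t ^ (-1 / 2 : ℝ) := by
    rw [← rpow_add (by positivity)]
    exact (rpow_le_rpow_of_nonpos ht (by linarith) (by norm_num)).trans_eq (by norm_num)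
  rw [(hB.indepFun_abs_rpow_coord ht.le (by decide) _).integral_fun_mul_eq_mul_integral
    (hB.integrable_abs_coord_rpow ht 0 (by norm_num)).aestronglyMeasurable
    (hB.integrable_abs_coord_rpow ht 1 (by norm_num)).aestronglyMeasurable, hmoment, hmoment,
    show (2 * t) ^ (-1 / 4 : ℝ) * Gamma (1 / 4) / √π
        * ((2 * t) ^ (-1 / 4 : ℝ) * Gamma (1 / 4) / √π)
      = Gamma (1 / 4) ^ 2 / π * ((2 * t) ^ (-1 / 4 : ℝ) * (2 * t) ^ (-1 / 4 : ℝ)) by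
    rw [div_mul_div_comm, mul_self_sqrt pi_pos.le]; ring]
  gcongr

lemma integral_pow_add_abs_log_norm_le (hB : IsBM μ B) {a : ℝ} {k : ℕ} (hka : (k : ℝ) ≤ a)
    {t : ℝ} (ht : 0 < t) (ht1 : t ≤ 1) :
    ∫ ω, (a + |log ‖B t ω‖|) ^ k ∂μ ≤ a ^ k * (4 + Gamma (1 / 4) ^ 2 / π * t ^ (-1 / 2 : ℝ)) := by
  have ha : 0 ≤ a := (Nat.cast_nonneg k).trans hka
  have hsum : Integrable (fun ω => ∑ l, |B t ω l|) μ :=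
    integrable_finsetSum _ fun l _ => hB.integrable_abs_coord ht l
  have hprod : Integrable (fun ω => |B t ω 0| ^ (-1 / 2 : ℝ) * |B t ω 1| ^ (-1 / 2 : ℝ)) μ :=
    (hB.indepFun_abs_rpow_coord ht.le (by decide) _).integrable_mul
      (hB.integrable_abs_coord_rpow ht 0 (by norm_num))
      (hB.integrable_abs_coord_rpow ht 1 (by norm_num))
  have hbound : ∀ᵐ ω ∂μ, (a + |log ‖B t ω‖|) ^ k
      ≤ a ^ k * (∑ l, |B t ω l| + |B t ω 0| ^ (-1 / 2 : ℝ) * |B t ω 1| ^ (-1 / 2 : ℝ)) := by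
    filter_upwards [hB.ae_coord_ne_zero ht 0, hB.ae_coord_ne_zero ht 1] with ω h0 h1
    exact (B t ω).pow_add_abs_log_norm_le hka (by decide) h0 h1
  calc ∫ ω, (a + |log ‖B t ω‖|) ^ k ∂μ
      ≤ ∫ ω, a ^ k * (∑ l, |B t ω l| + |B t ω 0| ^ (-1 / 2 : ℝ) * |B t ω 1| ^ (-1 / 2 : ℝ)) ∂μ :=
        integral_mono_of_nonneg (ae_of_all _ fun ω => by positivity)
          ((hsum.add hprod).const_mul _) hbound
    _ = a ^ k * (∫ ω, ∑ l, |B t ω l| ∂μ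
          + ∫ ω, |B t ω 0| ^ (-1 / 2 : ℝ) * |B t ω 1| ^ (-1 / 2 : ℝ) ∂μ) := by
        rw [integral_const_mul, integral_add hsum hprod]
    _ ≤ a ^ k * (4 + Gamma (1 / 4) ^ 2 / π * t ^ (-1 / 2 : ℝ)) := by
        gcongr
        exacts [hB.integral_sum_abs_coord_le ht ht1, hB.integral_abs_rpow_mul_abs_rpow_coord_le ht]

end IsBM

theorem integral_expectation_log_norm_pow_le_general
    {Ω : Type*} [MeasurableSpace Ω] (μ : Measure Ω)
    (B : ℝ → Ω → EuclideanSpace ℝ (Fin 4)) (hB : IsBM μ B) :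
    ∃ C : ℝ, 0 < C ∧ ∀ (a : ℝ) (k : ℕ), 0 ≤ a → 1 ≤ k → (k : ℝ) ≤ a →
      ∫ t in (0:ℝ)..1, ∫ ω, (a + |Real.log ‖B t ω‖|) ^ k ∂μ
        ≤ C * k * a ^ k := by
  set c := Gamma (1 / 4) ^ 2 / π
  refine ⟨4 + 2 * c, by positivity, fun a k _ hk hka => ?_⟩
  have hk' : (1 : ℝ) ≤ k := by exact_mod_cast hk
  have hrpow : IntervalIntegrable (fun t : ℝ => t ^ (-1 / 2 : ℝ)) volume 0 1 :=
    intervalIntegral.intervalIntegrable_rpow' (by norm_num)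
  have hmajorant :
      ∫ t in (0 : ℝ)..1, a ^ k * (4 + c * t ^ (-1 / 2 : ℝ)) = a ^ k * (4 + 2 * c) := by
    rw [intervalIntegral.integral_const_mul, intervalIntegral.integral_add intervalIntegrable_const
      (hrpow.const_mul c), intervalIntegral.integral_const_mul, integral_rpow (by norm_num)]
    congr 1
    norm_num
    ring
  by_cases hint : IntervalIntegrable (fun t => ∫ ω, (a + |log ‖B t ω‖|) ^ k ∂μ) volume 0 1
  · calc ∫ t in (0 : ℝ)..1, ∫ ω, (a + |log ‖B t ω‖|) ^ k ∂μ
        ≤ ∫ t in (0 : ℝ)..1, a ^ k * (4 + c * t ^ (-1 / 2 : ℝ)) :=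
          intervalIntegral.integral_mono_on_of_le_Ioo zero_le_one hint
            ((intervalIntegrable_const.add (hrpow.const_mul c)).const_mul _)
            fun t ht => hB.integral_pow_add_abs_log_norm_le hka ht.1 ht.2.le
      _ = (4 + 2 * c) * 1 * a ^ k := by rw [hmajorant]; ring
      _ ≤ (4 + 2 * c) * k * a ^ k := by gcongr
  · rw [intervalIntegral.integral_undef hint]
    positivity

/-- for standard 4-dimensional Brownian motion `β`, all `a ≥ 0`
and integers `k ≥ 1` with `a ≥ k`,
`∫₀¹ E[(a + |log ‖β_t‖|)^k] dt ≤ C k a^k` for a universal constant `C > 0`. -/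
theorem integral_expectation_log_norm_pow_le
    {Ω : Type*} [MeasurableSpace Ω] (μ : Measure Ω) [IsProbabilityMeasure μ]
    (B : ℝ → Ω → EuclideanSpace ℝ (Fin 4)) (hB : IsBM μ B) :
    ∃ C : ℝ, 0 < C ∧ ∀ (a : ℝ) (k : ℕ), 0 ≤ a → 1 ≤ k → (k : ℝ) ≤ a →
      ∫ t in (0:ℝ)..1, ∫ ω, (a + |Real.log ‖B t ω‖|) ^ k ∂μ
        ≤ C * k * a ^ k :=
  integral_expectation_log_norm_pow_le_general μ B hB
end
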